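/- arXiv:2605.18500 — 2 statements merged into one kernel-verified Lean document; each statement's English description precedes it below -/
import Mathlib

section
/- Let V ≥ 1, i ∈ {1,...,V}, A, η ∈ ℝ, and β₀,...,β_V ∈ ℝ with Z = Σ_{s=1}^V exp(β_s), N = exp(β₀)+Z, γ = Z/N. Let Z' = Σ_{s=1}^V exp(β_s + η·A·(δ_{si} − exp(β_s)/Z)) and f = (1/η)·log(Z'/Z) (assume η ≠ 0). Define the surrogate loss L'(β) = −A·[β_i − log N] + A·(1 − c)·log Z − f·β₀, where c = γ and f are treated as constants under differentiation (stop-gradient). Then ∂L'/∂β₀ = A·(1 − γ) − f, and ∂L'/∂β_j = −A·(δ_{ji} − exp(β_j)/Z) for all j ≥ 1. -/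
/-!
Stop-gradient makes `c` and `f` constants, so the surrogate loss is a linear combination of the
coordinates `β_i`, `β₀`, the log-sum-exp of all `V + 1` logits and the log-sum-exp of the last `V`.
A partial derivative of log-sum-exp is a softmax weight. At `β₀` this gives
`A · exp β₀ / N − f`, and `exp β₀ / N = 1 − γ`; at `β_j` the two softmax terms combine because
`1 / N + (1 − γ) / Z = 1 / Z`.
-/

open Real Function

noncomputable def logSumExp {ι : Type*} [Fintype ι] (b : ι → ℝ) : ℝ := log (∑ s, exp (b s))

theorem hasDerivAt_update_apply {ι : Type*} [DecidableEq ι] (b : ι → ℝ) (k m : ι) :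
    HasDerivAt (fun x => update b k x m) ((Pi.single k 1 : ι → ℝ) m) (b k) :=
  hasDerivAt_pi.1 (hasDerivAt_update b k (b k)) m

theorem hasDerivAt_logSumExp_update {ι : Type*} [Fintype ι] [DecidableEq ι] (b : ι → ℝ) (k : ι) :
    HasDerivAt (fun x => logSumExp (update b k x)) (exp (b k) / ∑ s, exp (b s)) (b k) := by
  have hsum : HasDerivAt (fun x => ∑ s, exp (update b k x s)) (exp (b k)) (b k) := by
    have := HasDerivAt.fun_sum (u := Finset.univ)
      fun s _ => (hasDerivAt_update_apply b k s).exp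
    simpa [Pi.single_apply, apply_ite] using this
  have hpos : 0 < ∑ s, exp (b s) := Finset.sum_pos (fun s _ => exp_pos _) ⟨k, Finset.mem_univ k⟩
  simpa [logSumExp] using hsum.log (by simpa using hpos.ne')

theorem logSumExp_fin_succ {n : ℕ} (b : Fin (n + 1) → ℝ) :
    logSumExp b = log (exp (b 0) + ∑ s : Fin n, exp (b s.succ)) := by
  rw [logSumExp, Fin.sum_univ_succ]

section SurrogateLoss

variable {V : ℕ} (A c f : ℝ) (i : Fin V)

noncomputable def surrogateLoss (b : Fin (V + 1) → ℝ) : ℝ :=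
  -A * (b i.succ - logSumExp b) + A * (1 - c) * logSumExp (Fin.tail b) - f * b 0

theorem hasDerivAt_surrogateLoss_update_zero (b : Fin (V + 1) → ℝ) :
    HasDerivAt (fun x => surrogateLoss A c f i (update b 0 x))
      (A * (exp (b 0) / ∑ s, exp (b s)) - f) (b 0) := by
  simp only [surrogateLoss, Fin.tail_update_zero]
  refine ((((hasDerivAt_update_apply b 0 i.succ).sub (hasDerivAt_logSumExp_update b 0)).const_mul
    (-A)).add_const _ |>.sub ((hasDerivAt_update_apply b 0 0).const_mul f)).congr_deriv ?_
  simp [Fin.succ_ne_zero]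

theorem hasDerivAt_surrogateLoss_update_succ (b : Fin (V + 1) → ℝ) (j : Fin V) :
    HasDerivAt (fun x => surrogateLoss A c f i (update b j.succ x))
      (-A * ((if j = i then 1 else 0) - exp (b j.succ) / ∑ s, exp (b s))
        + A * (1 - c) * (exp (b j.succ) / ∑ s : Fin V, exp (b s.succ))) (b j.succ) := by
  simp only [surrogateLoss, Fin.tail_update_succ]
  refine ((((hasDerivAt_update_apply b j.succ i.succ).sub
    (hasDerivAt_logSumExp_update b j.succ)).const_mul (-A)).add
    ((hasDerivAt_logSumExp_update (Fin.tail b) j).const_mul (A * (1 - c))) |>.sub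
    ((hasDerivAt_update_apply b j.succ 0).const_mul f)).congr_deriv ?_
  simp [Fin.tail, Pi.single_apply, eq_comm]

end SurrogateLoss

theorem stmt8_general (V : ℕ) (A : ℝ)
    (i : Fin V) (β : Fin (V + 1) → ℝ)
    (Z N γ f : ℝ)
    (hZ : Z = ∑ s : Fin V, Real.exp (β s.succ))
    (hN : N = Real.exp (β 0) + Z)
    (hγ : γ = Z / N)
    (L : (Fin (V + 1) → ℝ) → ℝ)
    (hL : ∀ b : Fin (V + 1) → ℝ,
      L b = -A * (b i.succ
              - Real.log (Real.exp (b 0) + ∑ s : Fin V, Real.exp (b s.succ)))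
            + A * (1 - γ) * Real.log (∑ s : Fin V, Real.exp (b s.succ))
            - f * b 0) :
    deriv (fun x => L (Function.update β 0 x)) (β 0) = A * (1 - γ) - f ∧
    ∀ j : Fin V,
      deriv (fun x => L (Function.update β j.succ x)) (β j.succ)
        = -A * ((if j = i then 1 else 0) - Real.exp (β j.succ) / Z) := by
  obtain rfl : L = surrogateLoss A γ f i :=
    funext fun b => by rw [hL, surrogateLoss, logSumExp_fin_succ]; rfl
  have hN_sum : N = ∑ s, exp (β s) := by rw [hN, hZ, Fin.sum_univ_succ]
  have hZ_pos : 0 < Z := hZ ▸ Finset.sum_pos (fun s _ => exp_pos _) ⟨i, Finset.mem_univ i⟩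
  refine ⟨(hasDerivAt_surrogateLoss_update_zero A γ f i β).deriv.trans ?_,
    fun j => (hasDerivAt_surrogateLoss_update_succ A γ f i β j).deriv.trans ?_⟩
  · rw [← hN_sum, hγ, hN]
    field_simp
    ring
  · rw [← hN_sum, ← hZ, hγ]
    field_simp
    ring

theorem stmt8 (V : ℕ) (hV : 1 ≤ V) (A η : ℝ) (hη : η ≠ 0)
    (i : Fin V) (β : Fin (V + 1) → ℝ)
    (Z N γ Z' f : ℝ)
    (hZ : Z = ∑ s : Fin V, Real.exp (β s.succ))
    (hN : N = Real.exp (β 0) + Z)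
    (hγ : γ = Z / N)
    (hZ' : Z' = ∑ s : Fin V,
      Real.exp (β s.succ + η * A * ((if s = i then 1 else 0) - Real.exp (β s.succ) / Z)))
    (hf : f = (1 / η) * Real.log (Z' / Z))
    (L : (Fin (V + 1) → ℝ) → ℝ)
    (hL : ∀ b : Fin (V + 1) → ℝ,
      L b = -A * (b i.succ
              - Real.log (Real.exp (b 0) + ∑ s : Fin V, Real.exp (b s.succ)))
            + A * (1 - γ) * Real.log (∑ s : Fin V, Real.exp (b s.succ))
            - f * b 0) :
    deriv (fun x => L (Function.update β 0 x)) (β 0) = A * (1 - γ) - f ∧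
    ∀ j : Fin V,
      deriv (fun x => L (Function.update β j.succ x)) (β j.succ)
        = -A * ((if j = i then 1 else 0) - Real.exp (β j.succ) / Z) :=
  stmt8_general V A i β Z N γ f hZ hN hγ L hL
end

section
/- Let V ≥ 1, i ∈ {1,...,V}, A, η ∈ ℝ with η ≠ 0, and β₀,...,β_V ∈ ℝ. Set Z = Σ_{s=1}^V exp(β_s), γ = Z/(exp(β₀)+Z), Z' = Σ_{s=1}^V exp(β_s + η·A·(δ_{si} − exp(β_s)/Z)). Define implicit updates β_j' = β_j + η·A·(δ_{ji} − exp(β_j)/Z) for j ≥ 1 and β₀' = β₀ − η·A·(1−γ) + log(Z'/Z). Define explicit updates with θ_j = β_j (j ≥ 1), θ₀ = log Z − β₀: θ_j' = θ_j + η·A·(δ_{ji} − exp(θ_j)/Z) for j ≥ 1 and θ₀' = θ₀ + η·A·(1−γ). Then θ₀' = log Z' − β₀' and θ_j' = β_j' for all j ≥ 1. -/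
theorem stmt9 (V : ℕ) (hV : 1 ≤ V) (A η : ℝ) (hη : η ≠ 0)
    (i : Fin V) (β β' θ θ' : Fin (V + 1) → ℝ)
    (Z γ Z' : ℝ)
    (hZ : Z = ∑ s : Fin V, Real.exp (β s.succ))
    (hγ : γ = Z / (Real.exp (β 0) + Z))
    (hZ' : Z' = ∑ s : Fin V,
      Real.exp (β s.succ + η * A * ((if s = i then 1 else 0) - Real.exp (β s.succ) / Z)))
    (hβ'j : ∀ j : Fin V,
      β' j.succ = β j.succ + η * A * ((if j = i then 1 else 0) - Real.exp (β j.succ) / Z))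
    (hβ'0 : β' 0 = β 0 - η * A * (1 - γ) + Real.log (Z' / Z))
    (hθj : ∀ j : Fin V, θ j.succ = β j.succ)
    (hθ0 : θ 0 = Real.log Z - β 0)
    (hθ'j : ∀ j : Fin V,
      θ' j.succ = θ j.succ + η * A * ((if j = i then 1 else 0) - Real.exp (θ j.succ) / Z))
    (hθ'0 : θ' 0 = θ 0 + η * A * (1 - γ)) :
    θ' 0 = Real.log Z' - β' 0 ∧ ∀ j : Fin V, θ' j.succ = β' j.succ := by
  have hVne : Nonempty (Fin V) := ⟨⟨0, hV⟩⟩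
  have hZpos : 0 < Z := by
    rw [hZ]; exact Finset.sum_pos (fun s _ => Real.exp_pos _) Finset.univ_nonempty
  have hZ'pos : 0 < Z' := by
    rw [hZ']; exact Finset.sum_pos (fun s _ => Real.exp_pos _) Finset.univ_nonempty
  constructor
  · rw [hθ'0, hθ0, hβ'0, Real.log_div (ne_of_gt hZ'pos) (ne_of_gt hZpos)]
    ring
  · intro j
    rw [hθ'j, hβ'j, hθj]
end
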